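/- arXiv:1207.4681 — 8 statements merged into one kernel-verified Lean document; each statement's English description precedes it below -/
import Mathlib

section
/- Let G be a finite simple graph, let v and w be adjacent vertices with deg(v) = deg(w) = 1 (an isolated edge), and let k ≥ 1 be an integer. Then G has a dominating set of size at most k if and only if the induced subgraph of G on V(G) \ {v, w} has a dominating set of size at most k − 1. -/
lemma deg_one_nbr {V : Type*} [Fintype V] [DecidableEq V]
    (G : SimpleGraph V) [DecidableRel G.Adj] {v w : V} (hvw : G.Adj v w)
    (hv : G.degree v = 1) : ∀ x, G.Adj v x → x = w := by
  intro x hx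
  have hcard : (G.neighborFinset v).card = 1 := by rwa [SimpleGraph.card_neighborFinset_eq_degree]
  obtain ⟨a, ha⟩ := Finset.card_eq_one.mp hcard
  have hx' : x ∈ G.neighborFinset v := by simpa using hx
  have hw' : w ∈ G.neighborFinset v := by simpa using hvw
  rw [ha, Finset.mem_singleton] at hx' hw'
  rw [hx', hw']

/-- Correctness of reduction rule R2 (isolated edge) for Dominating Set:
if `v w` is an isolated edge (both endpoints have degree 1) and `k ≥ 1`, then
`G` has a dominating set of size at most `k` iff the induced subgraph of `G` on
`V \ {v, w}` has a dominating set of size at most `k - 1`. -/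
theorem rule_R2_correct {V : Type*} [Fintype V] [DecidableEq V]
    (G : SimpleGraph V) [DecidableRel G.Adj]
    (v w : V) (hvw : G.Adj v w) (hv : G.degree v = 1) (hw : G.degree w = 1)
    (k : ℕ) (hk : 1 ≤ k) :
    (∃ D : Finset V, (∀ x : V, x ∈ D ∨ ∃ u ∈ D, G.Adj u x) ∧ D.card ≤ k) ↔
    (∃ D : Finset V, (∀ u ∈ D, u ≠ v ∧ u ≠ w) ∧
      (∀ x : V, x ≠ v → x ≠ w → (x ∈ D ∨ ∃ u ∈ D, G.Adj u x)) ∧ D.card ≤ k - 1) := by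
  have hvn := deg_one_nbr G hvw hv
  have hwn := deg_one_nbr G hvw.symm hw
  constructor
  · rintro ⟨D, hdom, hcard⟩
    refine ⟨D \ {v, w}, ?_, ?_, ?_⟩
    · intro u hu
      simp only [Finset.mem_sdiff, Finset.mem_insert, Finset.mem_singleton] at hu
      exact ⟨fun h => hu.2 (Or.inl h), fun h => hu.2 (Or.inr h)⟩
    · intro x hxv hxw
      rcases hdom x with hx | ⟨u, hu, hadj⟩
      · left
        simp only [Finset.mem_sdiff, Finset.mem_insert, Finset.mem_singleton]
        exact ⟨hx, by tauto⟩
      · have huv : u ≠ v := fun h => hxw (hvn x (h ▸ hadj))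
        have huw : u ≠ w := fun h => hxv (hwn x (h ▸ hadj))
        right
        exact ⟨u, by simp [Finset.mem_sdiff, hu, huv, huw], hadj⟩
    · -- v must be dominated, so v ∈ D or w ∈ D
      have hvw' : v ∈ D ∨ w ∈ D := by
        rcases hdom v with h | ⟨u, hu, hadj⟩
        · exact Or.inl h
        · have h := hvn u hadj.symm; exact Or.inr (h ▸ hu)
      have h1 : ∃ a ∈ ({v, w} : Finset V), a ∈ D := by
        rcases hvw' with h | h
        · exact ⟨v, by simp, h⟩
        · exact ⟨w, by simp, h⟩
      have : (D ∩ {v, w}).Nonempty := by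
        obtain ⟨a, ha1, ha2⟩ := h1
        exact ⟨a, Finset.mem_inter.mpr ⟨ha2, ha1⟩⟩
      have h2 : 1 ≤ (D ∩ {v, w}).card := Finset.card_pos.mpr this
      have h3 : (D ∩ {v, w}).card + (D \ {v, w}).card = D.card :=
        Finset.card_inter_add_card_sdiff D {v, w}
      omega
  · rintro ⟨D, hnot, hdom, hcard⟩
    refine ⟨insert v D, ?_, ?_⟩
    · intro x
      by_cases hxv : x = v
      · left; simp [hxv]
      by_cases hxw : x = w
      · right; exact ⟨v, by simp, hxw ▸ hvw⟩
      rcases hdom x hxv hxw with h | ⟨u, hu, hadj⟩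
      · left; simp [h]
      · right; exact ⟨u, by simp [hu], hadj⟩
    · have := Finset.card_insert_le v D
      omega
end

section
/- Let G be a finite simple graph and let v be a vertex having two distinct neighbors u₁ and u₂, each of degree 1 in G. Then for every integer k, G has a dominating set of size at most k if and only if the induced subgraph of G on V(G) \ {u₂} has a dominating set of size at most k. -/
lemma deg1_only_nbr {V : Type*} [Fintype V] [DecidableEq V]
    (G : SimpleGraph V) [DecidableRel G.Adj] {v x : V}
    (hadj : G.Adj v x) (hd : G.degree x = 1) :
    ∀ w, G.Adj x w → w = v := by
  intro w hw
  have hv : v ∈ G.neighborFinset x := by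
    rw [SimpleGraph.mem_neighborFinset]; exact hadj.symm
  have hwm : w ∈ G.neighborFinset x := by
    rw [SimpleGraph.mem_neighborFinset]; exact hw
  have hcard : (G.neighborFinset x).card = 1 := by
    rw [SimpleGraph.card_neighborFinset_eq_degree]; exact hd
  obtain ⟨a, ha⟩ := Finset.card_eq_one.mp hcard
  rw [ha, Finset.mem_singleton] at hv hwm
  rw [hwm, hv]

/-- Correctness of reduction rule R3 (multiple degree-1 neighbors) for Dominating Set:
if `v` has two distinct neighbors `u₁`, `u₂` each of degree 1, then for every `k`,
`G` has a dominating set of size at most `k` iff the induced subgraph of `G` on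
`V \ {u₂}` has a dominating set of size at most `k`. -/
theorem rule_R3_correct {V : Type*} [Fintype V] [DecidableEq V]
    (G : SimpleGraph V) [DecidableRel G.Adj]
    (v u₁ u₂ : V) (h12 : u₁ ≠ u₂) (h1 : G.Adj v u₁) (h2 : G.Adj v u₂)
    (hd1 : G.degree u₁ = 1) (hd2 : G.degree u₂ = 1) (k : ℕ) :
    (∃ D : Finset V, (∀ w : V, w ∈ D ∨ ∃ u ∈ D, G.Adj u w) ∧ D.card ≤ k) ↔
    (∃ D : Finset V, (∀ u ∈ D, u ≠ u₂) ∧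
      (∀ w : V, w ≠ u₂ → (w ∈ D ∨ ∃ u ∈ D, G.Adj u w)) ∧ D.card ≤ k) := by
  have honly2 := deg1_only_nbr G h2 hd2
  have honly1 := deg1_only_nbr G h1 hd1
  constructor
  · rintro ⟨D, hdom, hcard⟩
    refine ⟨insert v (D.erase u₂), ?_, ?_, ?_⟩
    · intro u hu
      rcases Finset.mem_insert.mp hu with rfl | hu
      · exact fun h => G.irrefl (h ▸ h2)
      · exact Finset.ne_of_mem_erase hu
    · intro w hw
      rcases hdom w with hwD | ⟨u, huD, hadj⟩
      · exact Or.inl (Finset.mem_insert_of_mem (Finset.mem_erase.mpr ⟨hw, hwD⟩))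
      · by_cases hu2 : u = u₂
        · subst hu2
          exact Or.inl (by rw [honly2 w hadj]; exact Finset.mem_insert_self v _)
        · exact Or.inr ⟨u, Finset.mem_insert_of_mem (Finset.mem_erase.mpr ⟨hu2, huD⟩), hadj⟩
    · by_cases hu2 : u₂ ∈ D
      · calc (insert v (D.erase u₂)).card ≤ (D.erase u₂).card + 1 :=
              Finset.card_insert_le _ _
          _ = D.card := by
              have := Finset.card_pos.mpr ⟨u₂, hu2⟩
              rw [Finset.card_erase_of_mem hu2]; omega
          _ ≤ k := hcard
      · have hvD : v ∈ D := by
          rcases hdom u₂ with h | ⟨u, huD, hadj⟩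
          · exact absurd h hu2
          · have hu : u = v := honly2 u hadj.symm
            exact hu ▸ huD
        rw [Finset.erase_eq_of_notMem hu2, Finset.insert_eq_self.mpr hvD]
        exact hcard
  · rintro ⟨D, hne, hdom, hcard⟩
    by_cases hv : v ∈ D
    · refine ⟨D, ?_, hcard⟩
      intro w
      by_cases hw : w = u₂
      · exact Or.inr ⟨v, hv, hw ▸ h2⟩
      · exact hdom w hw
    · by_cases h1D : u₁ ∈ D
      · refine ⟨insert v (D.erase u₁), ?_, ?_⟩
        · intro w
          by_cases hw2 : w = u₂
          · exact Or.inr ⟨v, Finset.mem_insert_self v _, hw2 ▸ h2⟩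
          by_cases hw1 : w = u₁
          · exact Or.inr ⟨v, Finset.mem_insert_self v _, hw1 ▸ h1⟩
          rcases hdom w hw2 with hwD | ⟨u, huD, hadj⟩
          · exact Or.inl (Finset.mem_insert_of_mem (Finset.mem_erase.mpr ⟨hw1, hwD⟩))
          · by_cases hu1 : u = u₁
            · subst hu1
              exact Or.inl (by rw [honly1 w hadj]; exact Finset.mem_insert_self v _)
            · exact Or.inr ⟨u, Finset.mem_insert_of_mem (Finset.mem_erase.mpr ⟨hu1, huD⟩), hadj⟩
        · calc (insert v (D.erase u₁)).card ≤ (D.erase u₁).card + 1 :=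
              Finset.card_insert_le _ _
            _ = D.card := by
                have := Finset.card_pos.mpr ⟨u₁, h1D⟩
                rw [Finset.card_erase_of_mem h1D]; omega
            _ ≤ k := hcard
      · exfalso
        rcases hdom u₁ (by exact h12) with h | ⟨u, huD, hadj⟩
        · exact h1D h
        · have := honly1 u hadj.symm
          exact hv (this ▸ huD)
end

section
/- Let G be a finite simple graph and let a, b, c, d be four pairwise distinct vertices with a adjacent to b, b adjacent to c, c adjacent to d, and deg(b) = deg(c) = 2. Let k ≥ 1 be an integer. Let G′ be the simple graph with vertex set V(G) \ {b, c, d} in which two distinct vertices x, y are adjacent if and only if either x and y are adjacent in G, or (x = a and y is a neighbor of d in G with y ∉ {a, b, c}), or (y = a and x is a neighbor of d in G with x ∉ {a, b, c}). (G′ is the graph obtained from G by contracting the path a b c d into the single vertex a.) Then G has a dominating set of size at most k if and only if G′ has a dominating set of size at most k − 1. -/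
/-- Correctness of reduction rule R4 (the case `a ≠ d`) for Dominating Set:
given a path `a b c d` on four pairwise distinct vertices with `deg b = deg c = 2`
and `k ≥ 1`, let `G'` be the graph obtained from `G` by contracting the path
`a b c d` into the single vertex `a` (vertex set `V \ {b, c, d}`; distinct `x, y`
are adjacent iff they are adjacent in `G`, or `x = a` and `y` is a neighbor of `d`
in `G` with `y ∉ {a, b, c}`, or symmetrically). Then `G` has a dominating set of
size at most `k` iff `G'` has a dominating set of size at most `k - 1`. -/
theorem rule_R4_correct_a_ne_d {V : Type*} [Fintype V] [DecidableEq V]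
    (G : SimpleGraph V) [DecidableRel G.Adj]
    (a b c d : V)
    (hab : a ≠ b) (hac : a ≠ c) (had : a ≠ d) (hbc : b ≠ c) (hbd : b ≠ d) (hcd : c ≠ d)
    (e1 : G.Adj a b) (e2 : G.Adj b c) (e3 : G.Adj c d)
    (degb : G.degree b = 2) (degc : G.degree c = 2)
    (k : ℕ) (hk : 1 ≤ k)
    (G' : SimpleGraph {x : V // x ≠ b ∧ x ≠ c ∧ x ≠ d})
    (hG' : ∀ x y : {x : V // x ≠ b ∧ x ≠ c ∧ x ≠ d},
      G'.Adj x y ↔ x ≠ y ∧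
        (G.Adj x.val y.val ∨
         (x.val = a ∧ G.Adj d y.val ∧ y.val ≠ a ∧ y.val ≠ b ∧ y.val ≠ c) ∨
         (y.val = a ∧ G.Adj d x.val ∧ x.val ≠ a ∧ x.val ≠ b ∧ x.val ≠ c))) :
    (∃ D : Finset V, (∀ w : V, w ∈ D ∨ ∃ u ∈ D, G.Adj u w) ∧ D.card ≤ k) ↔
    (∃ D : Finset {x : V // x ≠ b ∧ x ≠ c ∧ x ≠ d},
      (∀ w, w ∈ D ∨ ∃ u ∈ D, G'.Adj u w) ∧ D.card ≤ k - 1) := by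
  classical
  have pa : a ≠ b ∧ a ≠ c ∧ a ≠ d := ⟨hab, hac, had⟩
  set aV : {x : V // x ≠ b ∧ x ≠ c ∧ x ≠ d} := ⟨a, pa⟩ with haV
  -- neighbor characterizations
  have nb : ∀ x, G.Adj b x → x = a ∨ x = c := by
    intro x hx
    have hsub : ({a, c} : Finset V) ⊆ G.neighborFinset b := by
      intro y hy
      simp only [Finset.mem_insert, Finset.mem_singleton] at hy
      rcases hy with rfl | rfl
      · exact (G.mem_neighborFinset b y).mpr e1.symm
      · exact (G.mem_neighborFinset b y).mpr e2
    have hle : (G.neighborFinset b).card ≤ ({a, c} : Finset V).card := by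
      rw [G.card_neighborFinset_eq_degree, degb, Finset.card_pair hac]
    have heq := Finset.eq_of_subset_of_card_le hsub hle
    have : x ∈ ({a, c} : Finset V) := by
      rw [heq]; exact (G.mem_neighborFinset b x).mpr hx
    simpa using this
  have nc : ∀ x, G.Adj c x → x = b ∨ x = d := by
    intro x hx
    have hsub : ({b, d} : Finset V) ⊆ G.neighborFinset c := by
      intro y hy
      simp only [Finset.mem_insert, Finset.mem_singleton] at hy
      rcases hy with rfl | rfl
      · exact (G.mem_neighborFinset c y).mpr e2.symm
      · exact (G.mem_neighborFinset c y).mpr e3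
    have hle : (G.neighborFinset c).card ≤ ({b, d} : Finset V).card := by
      rw [G.card_neighborFinset_eq_degree, degc, Finset.card_pair hbd]
    have heq := Finset.eq_of_subset_of_card_le hsub hle
    have : x ∈ ({b, d} : Finset V) := by
      rw [heq]; exact (G.mem_neighborFinset c x).mpr hx
    simpa using this
  have hnbd : ¬ G.Adj b d := by
    intro h
    rcases nb d h with h' | h'
    · exact had h'.symm
    · exact hcd h'.symm
  have hnca : ¬ G.Adj c a := by
    intro h
    rcases nc a h with h' | h'
    · exact hab h'
    · exact had h'
  constructor
  · rintro ⟨D, hD, hcard⟩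
    set F : Finset {x : V // x ≠ b ∧ x ≠ c ∧ x ≠ d} :=
      D.subtype (fun x => x ≠ b ∧ x ≠ c ∧ x ≠ d) with hF
    have memF : ∀ x : {x : V // x ≠ b ∧ x ≠ c ∧ x ≠ d}, x ∈ F ↔ x.val ∈ D := by
      intro x; simp [hF]
    -- dominator of c gives an element of D among {b,c,d}
    have hcdom : b ∈ D ∨ c ∈ D ∨ d ∈ D := by
      rcases hD c with h | ⟨u, hu, hadj⟩
      · exact Or.inr (Or.inl h)
      · rcases nc u hadj.symm with rfl | rfl
        · exact Or.inl hu
        · exact Or.inr (Or.inr hu)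
    -- cardinality helpers
    have cardF : F.card = (D.filter (fun x => x ≠ b ∧ x ≠ c ∧ x ≠ d)).card := by
      rw [hF, Finset.card_subtype]
    have cardErase1 : ∀ x, x ∈ D → (x = b ∨ x = c ∨ x = d) → F.card ≤ k - 1 := by
      intro x hx hx3
      have hsub : D.filter (fun x => x ≠ b ∧ x ≠ c ∧ x ≠ d) ⊆ D.erase x := by
        intro y hy
        rw [Finset.mem_filter] at hy
        rw [Finset.mem_erase]
        refine ⟨?_, hy.1⟩
        rcases hx3 with rfl | rfl | rfl
        exacts [hy.2.1, hy.2.2.1, hy.2.2.2]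
      have h1 := Finset.card_le_card hsub
      rw [Finset.card_erase_of_mem hx] at h1
      rw [cardF]
      omega
    have cardErase2 : ∀ x y, x ∈ D → y ∈ D → x ≠ y → (x = b ∨ x = c ∨ x = d) →
        (y = b ∨ y = c ∨ y = d) → (insert aV F).card ≤ k - 1 := by
      intro x y hx hy hxy hx3 hy3
      have hyx : y ∈ D.erase x := Finset.mem_erase.mpr ⟨fun h => hxy h.symm, hy⟩
      have hsub : D.filter (fun x => x ≠ b ∧ x ≠ c ∧ x ≠ d) ⊆ (D.erase x).erase y := by
        intro z hz
        rw [Finset.mem_filter] at hz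
        rw [Finset.mem_erase, Finset.mem_erase]
        refine ⟨?_, ?_, hz.1⟩
        · rcases hy3 with rfl | rfl | rfl
          exacts [hz.2.1, hz.2.2.1, hz.2.2.2]
        · rcases hx3 with rfl | rfl | rfl
          exacts [hz.2.1, hz.2.2.1, hz.2.2.2]
      have h1 := Finset.card_le_card hsub
      rw [Finset.card_erase_of_mem hyx, Finset.card_erase_of_mem hx] at h1
      have h2 := Finset.card_insert_le aV F
      have h3 : 1 ≤ D.card := Finset.card_pos.mpr ⟨x, hx⟩
      have h4 : 1 ≤ (D.erase x).card := Finset.card_pos.mpr ⟨y, hyx⟩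
      have h5 := Finset.card_erase_of_mem hx
      rw [cardF] at *
      omega
    -- L1 : insert aV F dominates G'
    have domIns : ∀ w, w ∈ insert aV F ∨ ∃ u ∈ insert aV F, G'.Adj u w := by
      rintro ⟨wv, hw⟩
      rcases hD wv with hmem | ⟨u, hu, hadj⟩
      · exact Or.inl (Finset.mem_insert_of_mem ((memF _).mpr hmem))
      · by_cases hub : u = b
        · rw [hub] at hadj
          rcases nb wv hadj with hwv | hwv
          · left
            have : (⟨wv, hw⟩ : {x : V // x ≠ b ∧ x ≠ c ∧ x ≠ d}) = aV := Subtype.ext hwv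
            rw [this]; exact Finset.mem_insert_self _ _
          · exact absurd hwv hw.2.1
        · by_cases huc : u = c
          · rw [huc] at hadj
            rcases nc wv hadj with hwv | hwv
            · exact absurd hwv hw.1
            · exact absurd hwv hw.2.2
          · by_cases hud : u = d
            · rw [hud] at hadj
              by_cases hwa : wv = a
              · left
                have : (⟨wv, hw⟩ : {x : V // x ≠ b ∧ x ≠ c ∧ x ≠ d}) = aV := Subtype.ext hwa
                rw [this]; exact Finset.mem_insert_self _ _
              · right
                refine ⟨aV, Finset.mem_insert_self _ _, ?_⟩
                rw [hG']
                exact ⟨fun h => hwa (congrArg Subtype.val h).symm,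
                  Or.inr (Or.inl ⟨rfl, hadj, hwa, hw.1, hw.2.1⟩)⟩
            · right
              refine ⟨⟨u, hub, huc, hud⟩,
                Finset.mem_insert_of_mem ((memF _).mpr hu), ?_⟩
              rw [hG']
              exact ⟨fun h => hadj.ne (congrArg Subtype.val h), Or.inl hadj⟩
    -- L2 : F dominates G' when d ∉ D and some e ∈ F sees a or d
    have domSub : d ∉ D →
        (∃ e, e ∈ D ∧ (e ≠ b ∧ e ≠ c ∧ e ≠ d) ∧ (e = a ∨ G.Adj e a ∨ G.Adj e d)) →
        ∀ w, w ∈ F ∨ ∃ u ∈ F, G'.Adj u w := by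
      rintro hdD ⟨e, heD, hep, he⟩ ⟨wv, hw⟩
      have heF : (⟨e, hep⟩ : {x : V // x ≠ b ∧ x ≠ c ∧ x ≠ d}) ∈ F := (memF _).mpr heD
      rcases hD wv with hmem | ⟨u, hu, hadj⟩
      · exact Or.inl ((memF _).mpr hmem)
      · by_cases hub : u = b
        · rw [hub] at hadj
          rcases nb wv hadj with hwv | hwv
          · -- wv = a : dominated through e
            by_cases hea : e = a
            · left
              have : (⟨wv, hw⟩ : {x : V // x ≠ b ∧ x ≠ c ∧ x ≠ d}) = ⟨e, hep⟩ :=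
                Subtype.ext (hwv.trans hea.symm)
              rw [this]; exact heF
            · right
              refine ⟨⟨e, hep⟩, heF, ?_⟩
              rw [hG']
              refine ⟨fun h => hea ((congrArg Subtype.val h).trans hwv), ?_⟩
              rcases he with hea' | hea' | hed
              · exact absurd hea' hea
              · exact Or.inl (hwv.symm ▸ hea')
              · exact Or.inr (Or.inr ⟨hwv, hed.symm, hea, hep.1, hep.2.1⟩)
          · exact absurd hwv hw.2.1
        · by_cases huc : u = c
          · rw [huc] at hadj
            rcases nc wv hadj with hwv | hwv
            · exact absurd hwv hw.1
            · exact absurd hwv hw.2.2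
          · by_cases hud : u = d
            · exact absurd hu (hud ▸ hdD)
            · right
              refine ⟨⟨u, hub, huc, hud⟩, (memF _).mpr hu, ?_⟩
              rw [hG']
              exact ⟨fun h => hadj.ne (congrArg Subtype.val h), Or.inl hadj⟩
    by_cases hA : a ∈ D
    · -- a ∈ D : use insert aV F = F
      have haF : aV ∈ F := (memF _).mpr hA
      have hIns : insert aV F = F := Finset.insert_eq_self.mpr haF
      refine ⟨insert aV F, domIns, ?_⟩
      rw [hIns]
      rcases hcdom with h | h | h
      · exact cardErase1 b h (Or.inl rfl)
      · exact cardErase1 c h (Or.inr (Or.inl rfl))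
      · exact cardErase1 d h (Or.inr (Or.inr rfl))
    · by_cases hb' : b ∈ D
      · by_cases hc' : c ∈ D
        · exact ⟨insert aV F, domIns,
            cardErase2 b c hb' hc' hbc (Or.inl rfl) (Or.inr (Or.inl rfl))⟩
        · by_cases hd' : d ∈ D
          · exact ⟨insert aV F, domIns,
              cardErase2 b d hb' hd' hbd (Or.inl rfl) (Or.inr (Or.inr rfl))⟩
          · -- only b ∈ D : find neighbor of d in D
            have hddom : ∃ e, e ∈ D ∧ (e ≠ b ∧ e ≠ c ∧ e ≠ d) ∧
                (e = a ∨ G.Adj e a ∨ G.Adj e d) := by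
              rcases hD d with h | ⟨u, hu, hadj⟩
              · exact absurd h hd'
              · have hub : u ≠ b := fun h => hnbd (h ▸ hadj)
                have huc : u ≠ c := fun h => hc' (h ▸ hu)
                have hud : u ≠ d := hadj.ne
                exact ⟨u, hu, ⟨hub, huc, hud⟩, Or.inr (Or.inr hadj)⟩
            exact ⟨F, domSub hd' hddom, cardErase1 b hb' (Or.inl rfl)⟩
      · by_cases hc' : c ∈ D
        · by_cases hd' : d ∈ D
          · exact ⟨insert aV F, domIns,
              cardErase2 c d hc' hd' hcd (Or.inr (Or.inl rfl)) (Or.inr (Or.inr rfl))⟩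
          · -- only c ∈ D : find neighbor of a in D
            have hadom : ∃ e, e ∈ D ∧ (e ≠ b ∧ e ≠ c ∧ e ≠ d) ∧
                (e = a ∨ G.Adj e a ∨ G.Adj e d) := by
              rcases hD a with h | ⟨u, hu, hadj⟩
              · exact absurd h hA
              · have hub : u ≠ b := fun h => hb' (h ▸ hu)
                have huc : u ≠ c := fun h => hnca (h ▸ hadj)
                have hud : u ≠ d := fun h => hd' (h ▸ hu)
                exact ⟨u, hu, ⟨hub, huc, hud⟩, Or.inr (Or.inl hadj)⟩
            exact ⟨F, domSub hd' hadom, cardErase1 c hc' (Or.inr (Or.inl rfl))⟩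
        · -- b ∉ D, c ∉ D : b cannot be dominated unless a ∈ D
          exfalso
          rcases hD b with h | ⟨u, hu, hadj⟩
          · exact hb' h
          · rcases nb u hadj.symm with rfl | rfl
            · exact hA hu
            · exact hc' hu
  · rintro ⟨D', hD', hcard'⟩
    set S : Finset V := D'.map ⟨Subtype.val, Subtype.val_injective⟩ with hS
    have memS : ∀ y : {x : V // x ≠ b ∧ x ≠ c ∧ x ≠ d}, y ∈ D' → y.val ∈ S := by
      intro y hy
      rw [hS, Finset.mem_map]
      exact ⟨y, hy, rfl⟩
    have cardIns : ∀ x : V, (insert x S).card ≤ k := by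
      intro x
      have h1 := Finset.card_insert_le x S
      have h2 : S.card = D'.card := Finset.card_map _
      omega
    by_cases hA' : aV ∈ D'
    · -- a ∈ D' : add d
      refine ⟨insert d S, ?_, cardIns d⟩
      intro w
      by_cases hwa : w = a
      · rw [hwa]; exact Or.inl (Finset.mem_insert_of_mem (memS aV hA'))
      by_cases hwb : w = b
      · rw [hwb]; exact Or.inr ⟨a, Finset.mem_insert_of_mem (memS aV hA'), e1⟩
      by_cases hwc : w = c
      · rw [hwc]; exact Or.inr ⟨d, Finset.mem_insert_self _ _, e3.symm⟩
      by_cases hwd : w = d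
      · rw [hwd]; exact Or.inl (Finset.mem_insert_self _ _)
      rcases hD' ⟨w, hwb, hwc, hwd⟩ with hm | ⟨u, hu, hadj⟩
      · exact Or.inl (Finset.mem_insert_of_mem (memS _ hm))
      · rw [hG'] at hadj
        rcases hadj.2 with h1 | ⟨_, hdw, _⟩ | ⟨hwa', _, _⟩
        · exact Or.inr ⟨u.val, Finset.mem_insert_of_mem (memS u hu), h1⟩
        · exact Or.inr ⟨d, Finset.mem_insert_self _ _, hdw⟩
        · exact absurd hwa' hwa
    · by_cases hB : ∃ u ∈ D', G.Adj u.val a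
      · -- some G-neighbor of a in D' : add c
        obtain ⟨u0, hu0, hu0a⟩ := hB
        refine ⟨insert c S, ?_, cardIns c⟩
        intro w
        by_cases hwa : w = a
        · rw [hwa]; exact Or.inr ⟨u0.val, Finset.mem_insert_of_mem (memS u0 hu0), hu0a⟩
        by_cases hwb : w = b
        · rw [hwb]; exact Or.inr ⟨c, Finset.mem_insert_self _ _, e2.symm⟩
        by_cases hwc : w = c
        · rw [hwc]; exact Or.inl (Finset.mem_insert_self _ _)
        by_cases hwd : w = d
        · rw [hwd]; exact Or.inr ⟨c, Finset.mem_insert_self _ _, e3⟩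
        rcases hD' ⟨w, hwb, hwc, hwd⟩ with hm | ⟨u, hu, hadj⟩
        · exact Or.inl (Finset.mem_insert_of_mem (memS _ hm))
        · rw [hG'] at hadj
          rcases hadj.2 with h1 | ⟨hua, _, _⟩ | ⟨hwa', _, _⟩
          · exact Or.inr ⟨u.val, Finset.mem_insert_of_mem (memS u hu), h1⟩
          · exact absurd ((Subtype.ext hua : u = aV) ▸ hu) hA'
          · exact absurd hwa' hwa
      · -- a dominated only through a G-neighbor of d : add b
        have hu0 : ∃ u ∈ D', G.Adj d u.val := by
          rcases hD' aV with hm | ⟨u, hu, hadj⟩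
          · exact absurd hm hA'
          · rw [hG'] at hadj
            rcases hadj.2 with h1 | ⟨_, _, hne, _⟩ | ⟨_, hdu, _⟩
            · exact absurd ⟨u, hu, h1⟩ hB
            · exact absurd rfl hne
            · exact ⟨u, hu, hdu⟩
        obtain ⟨u0, hu0m, hdu0⟩ := hu0
        refine ⟨insert b S, ?_, cardIns b⟩
        intro w
        by_cases hwa : w = a
        · rw [hwa]; exact Or.inr ⟨b, Finset.mem_insert_self _ _, e1.symm⟩
        by_cases hwb : w = b
        · rw [hwb]; exact Or.inl (Finset.mem_insert_self _ _)
        by_cases hwc : w = c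
        · rw [hwc]; exact Or.inr ⟨b, Finset.mem_insert_self _ _, e2⟩
        by_cases hwd : w = d
        · rw [hwd]; exact Or.inr ⟨u0.val, Finset.mem_insert_of_mem (memS u0 hu0m), hdu0.symm⟩
        rcases hD' ⟨w, hwb, hwc, hwd⟩ with hm | ⟨u, hu, hadj⟩
        · exact Or.inl (Finset.mem_insert_of_mem (memS _ hm))
        · rw [hG'] at hadj
          rcases hadj.2 with h1 | ⟨hua, _, _⟩ | ⟨hwa', _, _⟩
          · exact Or.inr ⟨u.val, Finset.mem_insert_of_mem (memS u hu), h1⟩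
          · exact absurd ((Subtype.ext hua : u = aV) ▸ hu) hA'
          · exact absurd hwa' hwa
end

section
/- Let G be a finite simple graph and let a, b, c be three pairwise distinct vertices with a adjacent to b, b adjacent to c, c adjacent to a, and deg(b) = deg(c) = 2. Then for every integer k, G has a dominating set of size at most k if and only if the induced subgraph of G on V(G) \ {c} has a dominating set of size at most k. -/
lemma nbr_eq_of_deg_two {V : Type*} [Fintype V] [DecidableEq V]
    (G : SimpleGraph V) [DecidableRel G.Adj] (x p q : V) (hpq : p ≠ q)
    (hp : G.Adj p x) (hq : G.Adj q x) (hdeg : G.degree x = 2) :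
    ∀ u, G.Adj u x → u = p ∨ u = q := by
  have hsub : ({p, q} : Finset V) ⊆ G.neighborFinset x := by
    intro u hu
    simp only [Finset.mem_insert, Finset.mem_singleton] at hu
    rcases hu with rfl | rfl <;> simp [SimpleGraph.mem_neighborFinset, hp, hq,
      (G.adj_symm hp), (G.adj_symm hq)]
  have hcard : ({p, q} : Finset V).card = 2 := by
    rw [Finset.card_insert_of_notMem (by simpa using hpq), Finset.card_singleton]
  have heq : ({p, q} : Finset V) = G.neighborFinset x := by
    apply Finset.eq_of_subset_of_card_le hsub
    rw [hcard]
    exact le_of_eq (by rw [← hdeg, SimpleGraph.card_neighborFinset_eq_degree])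
  intro u hu
  have : u ∈ ({p, q} : Finset V) := by
    rw [heq]; exact (SimpleGraph.mem_neighborFinset G x u).mpr (G.adj_symm hu)
  simpa using this

/-- Correctness of reduction rule R4 in the case `a = d` (a triangle `a b c` with
`deg b = deg c = 2`) for Dominating Set: for every `k`, `G` has a dominating set of
size at most `k` iff the induced subgraph of `G` on `V \ {c}` has a dominating set
of size at most `k`. -/
theorem rule_R4_correct_a_eq_d {V : Type*} [Fintype V] [DecidableEq V]
    (G : SimpleGraph V) [DecidableRel G.Adj]
    (a b c : V) (hab : a ≠ b) (hac : a ≠ c) (hbc : b ≠ c)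
    (e1 : G.Adj a b) (e2 : G.Adj b c) (e3 : G.Adj c a)
    (degb : G.degree b = 2) (degc : G.degree c = 2) (k : ℕ) :
    (∃ D : Finset V, (∀ w : V, w ∈ D ∨ ∃ u ∈ D, G.Adj u w) ∧ D.card ≤ k) ↔
    (∃ D : Finset V, (∀ u ∈ D, u ≠ c) ∧
      (∀ w : V, w ≠ c → (w ∈ D ∨ ∃ u ∈ D, G.Adj u w)) ∧ D.card ≤ k) := by
  have nbrc : ∀ u, G.Adj u c → u = a ∨ u = b :=
    nbr_eq_of_deg_two G c a b hab (G.adj_symm e3) e2 degc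
  have nbrb : ∀ u, G.Adj u b → u = a ∨ u = c :=
    nbr_eq_of_deg_two G b a c hac e1 (G.adj_symm e2) degb
  constructor
  · rintro ⟨D, hdom, hcard⟩
    by_cases hc : c ∈ D
    · refine ⟨insert a (D.erase c), ?_, ?_, ?_⟩
      · intro u hu
        rcases Finset.mem_insert.mp hu with rfl | hu
        · exact hac
        · exact Finset.ne_of_mem_erase hu
      · intro w hw
        rcases hdom w with hwD | ⟨u, huD, huw⟩
        · exact Or.inl (Finset.mem_insert_of_mem (Finset.mem_erase.mpr ⟨hw, hwD⟩))
        · by_cases huc : u = c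
          · subst huc
            rcases nbrc w (G.adj_symm huw) with rfl | rfl
            · exact Or.inl (Finset.mem_insert_self _ _)
            · exact Or.inr ⟨_, Finset.mem_insert_self _ _, e1⟩
          · exact Or.inr ⟨u, Finset.mem_insert_of_mem (Finset.mem_erase.mpr ⟨huc, huD⟩), huw⟩
      · have h1 : (insert a (D.erase c)).card ≤ (D.erase c).card + 1 :=
          Finset.card_insert_le _ _
        have h2 := Finset.card_erase_of_mem hc
        have h3 : 0 < D.card := Finset.card_pos.mpr ⟨c, hc⟩
        omega
    · refine ⟨D, fun u hu => fun h => hc (h ▸ hu), fun w _ => hdom w, hcard⟩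
  · rintro ⟨D, hnc, hdom, hcard⟩
    refine ⟨D, ?_, hcard⟩
    intro w
    by_cases hwc : w = c
    · subst hwc
      rcases hdom b hbc with hbD | ⟨u, huD, hub⟩
      · exact Or.inr ⟨b, hbD, e2⟩
      · rcases nbrb u hub with rfl | rfl
        · exact Or.inr ⟨_, huD, G.adj_symm e3⟩
        · exact absurd rfl (hnc _ huD)
    · exact hdom w hwc
end

section
/- Let G be a finite simple graph and let a, b, c, d be four pairwise distinct vertices with a adjacent to b, b adjacent to c, c adjacent to d, and deg(a) = deg(d) = 1. Let k ≥ 1 be an integer. Let G′ be the simple graph with vertex set V(G) \ {c} in which two distinct vertices x, y are adjacent if and only if either x and y are adjacent in G, or (x = b and y is a neighbor of c in G with y ≠ b), or (y = b and x is a neighbor of c in G with x ≠ b). (G′ is the graph obtained from G by contracting the edge bc.) Then G has a dominating set of size at most k if and only if G′ has a dominating set of size at most k − 1. -/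
/-- Correctness of reduction rule R5 for Dominating Set: given a path `a b c d` on
four pairwise distinct vertices with `deg a = deg d = 1` and `k ≥ 1`, let `G'` be
the graph obtained from `G` by contracting the edge `b c` (vertex set `V \ {c}`;
distinct `x, y` are adjacent iff they are adjacent in `G`, or `x = b` and `y` is a
neighbor of `c` in `G` with `y ≠ b`, or symmetrically). Then `G` has a dominating
set of size at most `k` iff `G'` has a dominating set of size at most `k - 1`. -/
theorem rule_R5_correct {V : Type*} [Fintype V] [DecidableEq V]
    (G : SimpleGraph V) [DecidableRel G.Adj]
    (a b c d : V)
    (hab : a ≠ b) (hac : a ≠ c) (had : a ≠ d) (hbc : b ≠ c) (hbd : b ≠ d) (hcd : c ≠ d)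
    (e1 : G.Adj a b) (e2 : G.Adj b c) (e3 : G.Adj c d)
    (dega : G.degree a = 1) (degd : G.degree d = 1)
    (k : ℕ) (hk : 1 ≤ k)
    (G' : SimpleGraph {x : V // x ≠ c})
    (hG' : ∀ x y : {x : V // x ≠ c},
      G'.Adj x y ↔ x ≠ y ∧
        (G.Adj x.val y.val ∨
         (x.val = b ∧ G.Adj c y.val ∧ y.val ≠ b) ∨
         (y.val = b ∧ G.Adj c x.val ∧ x.val ≠ b))) :
    (∃ D : Finset V, (∀ w : V, w ∈ D ∨ ∃ u ∈ D, G.Adj u w) ∧ D.card ≤ k) ↔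
    (∃ D : Finset {x : V // x ≠ c},
      (∀ w, w ∈ D ∨ ∃ u ∈ D, G'.Adj u w) ∧ D.card ≤ k - 1) := by
  have ha : ∀ x, G.Adj a x → x = b := by
    intro x hx
    have h1 : (G.neighborFinset a).card = 1 := dega
    obtain ⟨y, hy⟩ := Finset.card_eq_one.mp h1
    have hb' : b ∈ G.neighborFinset a := by simpa using e1
    have hx' : x ∈ G.neighborFinset a := by simpa using hx
    rw [hy, Finset.mem_singleton] at hb' hx'
    rw [hx', hb']
  have hdn : ∀ x, G.Adj d x → x = c := by
    intro x hx
    have h1 : (G.neighborFinset d).card = 1 := degd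
    obtain ⟨y, hy⟩ := Finset.card_eq_one.mp h1
    have hb' : c ∈ G.neighborFinset d := by simpa using e3.symm
    have hx' : x ∈ G.neighborFinset d := by simpa using hx
    rw [hy, Finset.mem_singleton] at hb' hx'
    rw [hx', hb']
  constructor
  · rintro ⟨D, hdom, hcard⟩
    have hcdD : c ∈ D ∨ d ∈ D := by
      rcases hdom d with h | ⟨u, hu, hadj⟩
      · exact Or.inr h
      · exact Or.inl ((hdn u hadj.symm) ▸ hu)
    set S : Finset V := {a, c, d} with hS
    set D' : Finset {x : V // x ≠ c} :=
      insert ⟨b, hbc⟩ ((D \ S).subtype (· ≠ c)) with hD'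
    have hbD' : (⟨b, hbc⟩ : {x : V // x ≠ c}) ∈ D' := Finset.mem_insert_self _ _
    refine ⟨D', ?_, ?_⟩
    · intro w
      by_cases hwb : w.val = b
      · left
        have : w = ⟨b, hbc⟩ := Subtype.ext hwb
        rw [this]; exact hbD'
      have hwc : w.val ≠ c := w.2
      by_cases hwa : w.val = a
      · right
        refine ⟨⟨b, hbc⟩, hbD', (hG' _ _).mpr ⟨?_, Or.inl ?_⟩⟩
        · intro h; exact hwb (congrArg Subtype.val h).symm
        · rw [hwa]; exact e1.symm
      by_cases hwd : w.val = d
      · right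
        refine ⟨⟨b, hbc⟩, hbD', (hG' _ _).mpr ⟨?_, Or.inr (Or.inl ⟨rfl, ?_, ?_⟩)⟩⟩
        · intro h; exact hwb (congrArg Subtype.val h).symm
        · rw [hwd]; exact e3
        · rw [hwd]; exact fun h => hbd h.symm
      rcases hdom w.val with hw | ⟨u, hu, hadj⟩
      · left
        refine Finset.mem_insert_of_mem ?_
        rw [Finset.mem_subtype]
        refine Finset.mem_sdiff.mpr ⟨hw, ?_⟩
        simp only [hS, Finset.mem_insert, Finset.mem_singleton]
        push_neg
        exact ⟨hwa, hwc, hwd⟩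
      · by_cases hua : u = a
        · exact absurd (ha w.val (hua ▸ hadj)) hwb
        by_cases hud : u = d
        · exact absurd (hdn w.val (hud ▸ hadj)) hwc
        by_cases huc : u = c
        · right
          refine ⟨⟨b, hbc⟩, hbD', (hG' _ _).mpr ⟨?_, Or.inr (Or.inl ⟨rfl, ?_, hwb⟩)⟩⟩
          · intro h; exact hwb (congrArg Subtype.val h).symm
          · exact huc ▸ hadj
        by_cases hub : u = b
        · right
          refine ⟨⟨b, hbc⟩, hbD', (hG' _ _).mpr ⟨?_, Or.inl (hub ▸ hadj)⟩⟩
          · intro h; exact hwb (congrArg Subtype.val h).symm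
        · right
          refine ⟨⟨u, huc⟩, ?_, (hG' _ _).mpr ⟨?_, Or.inl hadj⟩⟩
          · refine Finset.mem_insert_of_mem ?_
            rw [Finset.mem_subtype]
            refine Finset.mem_sdiff.mpr ⟨hu, ?_⟩
            simp only [hS, Finset.mem_insert, Finset.mem_singleton]
            push_neg
            exact ⟨hua, huc, hud⟩
          · intro h; exact hadj.ne (congrArg Subtype.val h)
    · have h1 : D'.card ≤ ((D \ S).subtype (· ≠ c)).card + 1 := Finset.card_insert_le _ _
      have h2 : ((D \ S).subtype (· ≠ c)).card ≤ (D \ S).card := by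
        rw [Finset.card_subtype]
        exact Finset.card_filter_le _ _
      have hbmem : b ∈ D → (⟨b, hbc⟩ : {x : V // x ≠ c}) ∈ (D \ S).subtype (· ≠ c) := by
        intro hbD
        rw [Finset.mem_subtype]
        refine Finset.mem_sdiff.mpr ⟨hbD, ?_⟩
        simp only [hS, Finset.mem_insert, Finset.mem_singleton]
        push_neg
        exact ⟨Ne.symm hab, hbc, hbd⟩
      rcases hcdD with hcD | hdD
      · by_cases hbD : b ∈ D
        · have h3 : D'.card ≤ (D \ S).card := by
            rw [hD', Finset.insert_eq_self.mpr (hbmem hbD)]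
            exact h2
          have hsub : D \ S ⊆ D.erase c := by
            intro x hx
            rw [Finset.mem_sdiff] at hx
            refine Finset.mem_erase.mpr ⟨?_, hx.1⟩
            intro h; exact hx.2 (by simp [hS, h])
          have := Finset.card_le_card hsub
          have hec : (D.erase c).card = D.card - 1 := Finset.card_erase_of_mem hcD
          have hpos : 1 ≤ D.card := Finset.card_pos.mpr ⟨c, hcD⟩
          omega
        · have haD : a ∈ D := by
            rcases hdom a with h | ⟨u, hu, hadj⟩
            · exact h
            · exact absurd ((ha u hadj.symm) ▸ hu) hbD
          have hsub : D \ S ⊆ (D.erase a).erase c := by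
            intro x hx
            rw [Finset.mem_sdiff] at hx
            refine Finset.mem_erase.mpr ⟨?_, Finset.mem_erase.mpr ⟨?_, hx.1⟩⟩
            · intro h; exact hx.2 (by simp [hS, h])
            · intro h; exact hx.2 (by simp [hS, h])
          have := Finset.card_le_card hsub
          have hec : ((D.erase a).erase c).card = (D.erase a).card - 1 :=
            Finset.card_erase_of_mem (Finset.mem_erase.mpr ⟨fun h => hac h.symm, hcD⟩)
          have hea : (D.erase a).card = D.card - 1 := Finset.card_erase_of_mem haD
          have hpos : 2 ≤ D.card := Finset.one_lt_card.mpr ⟨a, haD, c, hcD, hac⟩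
          omega
      · by_cases hbD : b ∈ D
        · have h3 : D'.card ≤ (D \ S).card := by
            rw [hD', Finset.insert_eq_self.mpr (hbmem hbD)]
            exact h2
          have hsub : D \ S ⊆ D.erase d := by
            intro x hx
            rw [Finset.mem_sdiff] at hx
            refine Finset.mem_erase.mpr ⟨?_, hx.1⟩
            intro h; exact hx.2 (by simp [hS, h])
          have := Finset.card_le_card hsub
          have hec : (D.erase d).card = D.card - 1 := Finset.card_erase_of_mem hdD
          have hpos : 1 ≤ D.card := Finset.card_pos.mpr ⟨d, hdD⟩
          omega
        · have haD : a ∈ D := by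
            rcases hdom a with h | ⟨u, hu, hadj⟩
            · exact h
            · exact absurd ((ha u hadj.symm) ▸ hu) hbD
          have hsub : D \ S ⊆ (D.erase a).erase d := by
            intro x hx
            rw [Finset.mem_sdiff] at hx
            refine Finset.mem_erase.mpr ⟨?_, Finset.mem_erase.mpr ⟨?_, hx.1⟩⟩
            · intro h; exact hx.2 (by simp [hS, h])
            · intro h; exact hx.2 (by simp [hS, h])
          have := Finset.card_le_card hsub
          have hec : ((D.erase a).erase d).card = (D.erase a).card - 1 :=
            Finset.card_erase_of_mem (Finset.mem_erase.mpr ⟨fun h => had h.symm, hdD⟩)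
          have hea : (D.erase a).card = D.card - 1 := Finset.card_erase_of_mem haD
          have hpos : 2 ≤ D.card := Finset.one_lt_card.mpr ⟨a, haD, d, hdD, had⟩
          omega
  · rintro ⟨D', hdom', hcard'⟩
    refine ⟨insert c (D'.image Subtype.val), ?_, ?_⟩
    · intro w
      by_cases hwc : w = c
      · left; rw [hwc]; exact Finset.mem_insert_self _ _
      by_cases hwb : w = b
      · right; exact ⟨c, Finset.mem_insert_self _ _, hwb ▸ e2.symm⟩
      by_cases hwd : w = d
      · right; exact ⟨c, Finset.mem_insert_self _ _, hwd ▸ e3⟩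
      rcases hdom' ⟨w, hwc⟩ with hw | ⟨u, hu, hadj⟩
      · left
        exact Finset.mem_insert_of_mem (Finset.mem_image.mpr ⟨_, hw, rfl⟩)
      · rcases ((hG' _ _).mp hadj).2 with h | ⟨_, h2, _⟩ | ⟨h1, _, _⟩
        · right
          exact ⟨u.val, Finset.mem_insert_of_mem (Finset.mem_image.mpr ⟨_, hu, rfl⟩), h⟩
        · right
          exact ⟨c, Finset.mem_insert_self _ _, h2⟩
        · exact absurd h1 hwb
    · have := Finset.card_insert_le c (D'.image Subtype.val)
      have := Finset.card_image_le (f := Subtype.val) (s := D')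
      omega
end

section
/- Let G be a finite simple graph and let a, b, c, d, e be five pairwise distinct vertices with a adjacent to b, b adjacent to c, c adjacent to d, d adjacent to e, and deg(a) = deg(e) = 1. Let G′ be the graph obtained from G by deleting the edge bc. Then for every integer k, G has a dominating set of size at most k if and only if G′ has a dominating set of size at most k. -/
/-- Correctness of reduction rule R6 for Dominating Set: given a path `a b c d e` on
five pairwise distinct vertices with `deg a = deg e = 1`, deleting the edge `b c`
does not change whether there is a dominating set of size at most `k`. -/
theorem rule_R6_correct {V : Type*} [Fintype V] [DecidableEq V]
    (G : SimpleGraph V) [DecidableRel G.Adj]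
    (a b c d e : V)
    (hab : a ≠ b) (hac : a ≠ c) (had : a ≠ d) (hae : a ≠ e) (hbc : b ≠ c)
    (hbd : b ≠ d) (hbe : b ≠ e) (hcd : c ≠ d) (hce : c ≠ e) (hde : d ≠ e)
    (e1 : G.Adj a b) (e2 : G.Adj b c) (e3 : G.Adj c d) (e4 : G.Adj d e)
    (dega : G.degree a = 1) (dege : G.degree e = 1) (k : ℕ) :
    (∃ D : Finset V, (∀ w : V, w ∈ D ∨ ∃ u ∈ D, G.Adj u w) ∧ D.card ≤ k) ↔
    (∃ D : Finset V, (∀ w : V, w ∈ D ∨ ∃ u ∈ D, (G.deleteEdges {s(b, c)}).Adj u w) ∧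
      D.card ≤ k) := by
  constructor
  · rintro ⟨D, hD, hcard⟩
    -- the only neighbor of a is b, the only neighbor of e is d
    have hNa : ∀ u, G.Adj u a → u = b := by
      intro u hu
      obtain ⟨x, hx⟩ := Finset.card_eq_one.mp dega
      have hb : b ∈ G.neighborFinset a := by
        rw [SimpleGraph.mem_neighborFinset]; exact e1
      have hu' : u ∈ G.neighborFinset a := by
        rw [SimpleGraph.mem_neighborFinset]; exact hu.symm
      rw [hx, Finset.mem_singleton] at hb hu'
      rw [hu', hb]
    have hNe : ∀ u, G.Adj u e → u = d := by
      intro u hu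
      obtain ⟨x, hx⟩ := Finset.card_eq_one.mp dege
      have hb : d ∈ G.neighborFinset e := by
        rw [SimpleGraph.mem_neighborFinset]; exact e4.symm
      have hu' : u ∈ G.neighborFinset e := by
        rw [SimpleGraph.mem_neighborFinset]; exact hu.symm
      rw [hx, Finset.mem_singleton] at hb hu'
      rw [hu', hb]
    -- a is dominated, so a ∈ D or b ∈ D
    have haD : a ∈ D ∨ b ∈ D := by
      rcases hD a with h | ⟨u, hu, hadj⟩
      · exact Or.inl h
      · exact Or.inr (hNa u hadj ▸ hu)
    have heD : e ∈ D ∨ d ∈ D := by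
      rcases hD e with h | ⟨u, hu, hadj⟩
      · exact Or.inl h
      · exact Or.inr (hNe u hadj ▸ hu)
    set S : Finset V := (D.erase a).erase e with hS
    refine ⟨insert b (insert d S), ?_, ?_⟩
    · have hbmem : b ∈ insert b (insert d S) := Finset.mem_insert_self _ _
      have hdmem : d ∈ insert b (insert d S) :=
        Finset.mem_insert_of_mem (Finset.mem_insert_self _ _)
      intro w
      by_cases hw1 : w = b
      · exact Or.inl (hw1 ▸ hbmem)
      by_cases hw2 : w = d
      · exact Or.inl (hw2 ▸ hdmem)
      by_cases hw3 : w = a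
      · refine Or.inr ⟨b, hbmem, ?_⟩
        rw [SimpleGraph.deleteEdges_adj]
        subst hw3
        refine ⟨e1.symm, ?_⟩
        simp only [Set.mem_singleton_iff, Sym2.eq_iff]
        push_neg
        tauto
      by_cases hw4 : w = c
      · refine Or.inr ⟨d, hdmem, ?_⟩
        rw [SimpleGraph.deleteEdges_adj]
        subst hw4
        refine ⟨e3.symm, ?_⟩
        simp only [Set.mem_singleton_iff, Sym2.eq_iff]
        push_neg
        tauto
      by_cases hw5 : w = e
      · refine Or.inr ⟨d, hdmem, ?_⟩
        rw [SimpleGraph.deleteEdges_adj]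
        subst hw5
        refine ⟨e4, ?_⟩
        simp only [Set.mem_singleton_iff, Sym2.eq_iff]
        push_neg
        tauto
      -- generic vertex
      rcases hD w with h | ⟨u, hu, hadj⟩
      · left
        refine Finset.mem_insert_of_mem (Finset.mem_insert_of_mem ?_)
        rw [hS]
        exact Finset.mem_erase.mpr ⟨hw5, Finset.mem_erase.mpr ⟨hw3, h⟩⟩
      · -- u dominates w in G; u ≠ a and u ≠ e since their only neighbors are b, d
        have hua : u ≠ a := by
          intro h; subst h
          exact hw1 (hNa w hadj.symm)
        have hue : u ≠ e := by
          intro h; subst h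
          exact hw2 (hNe w hadj.symm)
        refine Or.inr ⟨u, Finset.mem_insert_of_mem (Finset.mem_insert_of_mem ?_), ?_⟩
        · rw [hS]
          exact Finset.mem_erase.mpr ⟨hue, Finset.mem_erase.mpr ⟨hua, hu⟩⟩
        · rw [SimpleGraph.deleteEdges_adj]
          refine ⟨hadj, ?_⟩
          simp only [Set.mem_singleton_iff, Sym2.eq_iff]
          push_neg
          exact ⟨fun _ => hw4, fun _ => hw1⟩
    · -- cardinality bound
      by_cases ha : a ∈ D <;> by_cases he : e ∈ D
      · have h1 : e ∈ D.erase a := Finset.mem_erase.mpr ⟨hae.symm, he⟩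
        have hc1 : S.card = D.card - 2 := by
          rw [hS, Finset.card_erase_of_mem h1, Finset.card_erase_of_mem ha]
          omega
        have h2 : 2 ≤ D.card := by
          have : ({a, e} : Finset V).card ≤ D.card := by
            apply Finset.card_le_card
            intro x hx
            simp only [Finset.mem_insert, Finset.mem_singleton] at hx
            rcases hx with h | h <;> subst h <;> assumption
          simpa [Finset.card_insert_of_notMem, hae] using this
        calc (insert b (insert d S)).card ≤ (insert d S).card + 1 :=
              Finset.card_insert_le _ _
          _ ≤ S.card + 1 + 1 := by
              have := Finset.card_insert_le d S; omega
          _ ≤ D.card := by omega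
          _ ≤ k := hcard
      · have hd' : d ∈ D := heD.resolve_left he
        have hdS : d ∈ S := by
          rw [hS]
          exact Finset.mem_erase.mpr ⟨hde, Finset.mem_erase.mpr ⟨had.symm, hd'⟩⟩
        rw [Finset.insert_eq_self.mpr hdS]
        have hc1 : S.card = D.card - 1 := by
          rw [hS, Finset.erase_eq_of_notMem (fun h => he (Finset.mem_of_mem_erase h)),
            Finset.card_erase_of_mem ha]
        have h2 : 1 ≤ D.card := Finset.card_pos.mpr ⟨a, ha⟩
        have := Finset.card_insert_le b S
        omega
      · have hb' : b ∈ D := haD.resolve_left ha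
        have hbS : b ∈ insert d S := by
          refine Finset.mem_insert_of_mem ?_
          rw [hS]
          exact Finset.mem_erase.mpr ⟨hbe, Finset.mem_erase.mpr ⟨hab.symm, hb'⟩⟩
        rw [Finset.insert_eq_self.mpr hbS]
        have hc1 : S.card = D.card - 1 := by
          rw [hS, Finset.erase_eq_of_notMem ha, Finset.card_erase_of_mem he]
        have h2 : 1 ≤ D.card := Finset.card_pos.mpr ⟨e, he⟩
        have := Finset.card_insert_le d S
        omega
      · have hb' : b ∈ D := haD.resolve_left ha
        have hd' : d ∈ D := heD.resolve_left he
        have hSeq : S = D := by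
          rw [hS, Finset.erase_eq_of_notMem (fun h => he (Finset.mem_of_mem_erase h)),
            Finset.erase_eq_of_notMem ha]
        have hdS : d ∈ S := hSeq ▸ hd'
        have hbS : b ∈ insert d S := Finset.mem_insert_of_mem (hSeq ▸ hb')
        rw [Finset.insert_eq_self.mpr hbS, Finset.insert_eq_self.mpr hdS, hSeq]
        exact hcard
  · rintro ⟨D, hD, hcard⟩
    refine ⟨D, fun w => (hD w).imp id ?_, hcard⟩
    rintro ⟨u, hu, hadj⟩
    exact ⟨u, hu, (SimpleGraph.deleteEdges_adj.mp hadj).1⟩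
end

section
/- Let G be a finite simple graph in which any two distinct vertices of degree 1 are at distance at least 5 (no walk of length at most 4 joins them) and no two distinct vertices of degree 2 are adjacent. Let v₁, v₂, v₃, v₄ be four pairwise distinct vertices with v₁ adjacent to v₂, v₂ adjacent to v₃, and v₃ adjacent to v₄, and suppose that every neighbor of v₁ and every neighbor of v₄ lies in {v₁, v₂, v₃, v₄} (the path has no out-endpoint). Then there exists a vertex x ∈ {v₁, v₂, v₃, v₄} such that every vertex of {v₁, v₂, v₃, v₄} is equal or adjacent to x, i.e., {v₁, v₂, v₃, v₄} ⊆ N[x]. -/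
/-- In a graph where distinct degree-1 vertices are at distance at least 5 and no two
degree-2 vertices are adjacent, a path `v₁ v₂ v₃ v₄` on four distinct vertices with no
out-endpoint (all neighbors of `v₁` and of `v₄` lie in `{v₁, v₂, v₃, v₄}`) satisfies
`{v₁, v₂, v₃, v₄} = N[x]` for some `x` among the four vertices. -/
theorem path4_no_out_endpoint_dominated {V : Type*} [Fintype V] [DecidableEq V]
    (G : SimpleGraph V) [DecidableRel G.Adj]
    (h1 : ∀ u v : V, u ≠ v → G.degree u = 1 → G.degree v = 1 →
      ∀ p : G.Walk u v, 5 ≤ p.length)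
    (h2 : ∀ u v : V, G.degree u = 2 → G.degree v = 2 → ¬ G.Adj u v)
    (v₁ v₂ v₃ v₄ : V)
    (h12 : v₁ ≠ v₂) (h13 : v₁ ≠ v₃) (h14 : v₁ ≠ v₄)
    (h23 : v₂ ≠ v₃) (h24 : v₂ ≠ v₄) (h34 : v₃ ≠ v₄)
    (e1 : G.Adj v₁ v₂) (e2 : G.Adj v₂ v₃) (e3 : G.Adj v₃ v₄)
    (hn1 : ∀ z : V, G.Adj v₁ z → z ∈ ({v₁, v₂, v₃, v₄} : Set V))
    (hn4 : ∀ z : V, G.Adj v₄ z → z ∈ ({v₁, v₂, v₃, v₄} : Set V)) :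
    ∃ x ∈ ({v₁, v₂, v₃, v₄} : Set V),
      ∀ y ∈ ({v₁, v₂, v₃, v₄} : Set V), y = x ∨ G.Adj x y := by
  by_cases h13a : G.Adj v₁ v₃
  · -- v₃ dominates if v₃ adj v₁; need v₃ adj v₂, v₄ too: yes.
    exact ⟨v₃, by simp, by rintro y (rfl|rfl|rfl|rfl) <;>
      simp_all [SimpleGraph.adj_comm]⟩
  by_cases h24a : G.Adj v₂ v₄
  · exact ⟨v₂, by simp, by rintro y (rfl|rfl|rfl|rfl) <;>
      simp_all [SimpleGraph.adj_comm]⟩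
  by_cases h14a : G.Adj v₁ v₄
  · -- degrees of v₁ and v₄ are 2, adjacent: contradiction with h2
    exfalso
    have d1 : G.neighborFinset v₁ = {v₂, v₄} := by
      ext z
      simp only [SimpleGraph.mem_neighborFinset, Finset.mem_insert, Finset.mem_singleton]
      constructor
      · intro hz
        rcases hn1 z hz with rfl | rfl | rfl | rfl
        · exact absurd hz (G.irrefl)
        · exact Or.inl rfl
        · exact absurd hz h13a
        · exact Or.inr rfl
      · rintro (rfl | rfl)
        · exact e1
        · exact h14a
    have d4 : G.neighborFinset v₄ = {v₁, v₃} := by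
      ext z
      simp only [SimpleGraph.mem_neighborFinset, Finset.mem_insert, Finset.mem_singleton]
      constructor
      · intro hz
        rcases hn4 z hz with rfl | rfl | rfl | rfl
        · exact Or.inl rfl
        · exact absurd hz.symm h24a
        · exact Or.inr rfl
        · exact absurd hz (G.irrefl)
      · rintro (rfl | rfl)
        · exact h14a.symm
        · exact e3.symm
    have deg1 : G.degree v₁ = 2 := by
      rw [← SimpleGraph.card_neighborFinset_eq_degree, d1]
      simp [h24]
    have deg4 : G.degree v₄ = 2 := by
      rw [← SimpleGraph.card_neighborFinset_eq_degree, d4]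
      simp [h13]
    exact h2 v₁ v₄ deg1 deg4 h14a
  · -- v₁ and v₄ have degree 1, but walk of length 3 joins them
    exfalso
    have d1 : G.neighborFinset v₁ = {v₂} := by
      ext z
      simp only [SimpleGraph.mem_neighborFinset, Finset.mem_singleton]
      constructor
      · intro hz
        rcases hn1 z hz with rfl | rfl | rfl | rfl
        · exact absurd hz (G.irrefl)
        · rfl
        · exact absurd hz h13a
        · exact absurd hz h14a
      · rintro rfl; exact e1
    have d4 : G.neighborFinset v₄ = {v₃} := by
      ext z
      simp only [SimpleGraph.mem_neighborFinset, Finset.mem_singleton]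
      constructor
      · intro hz
        rcases hn4 z hz with rfl | rfl | rfl | rfl
        · exact absurd hz.symm h14a
        · exact absurd hz.symm h24a
        · rfl
        · exact absurd hz (G.irrefl)
      · rintro rfl; exact e3.symm
    have deg1 : G.degree v₁ = 1 := by
      rw [← SimpleGraph.card_neighborFinset_eq_degree, d1]; simp
    have deg4 : G.degree v₄ = 1 := by
      rw [← SimpleGraph.card_neighborFinset_eq_degree, d4]; simp
    have := h1 v₁ v₄ h14 deg1 deg4
      (SimpleGraph.Walk.cons e1 (SimpleGraph.Walk.cons e2 (SimpleGraph.Walk.cons e3 SimpleGraph.Walk.nil)))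
    simp [SimpleGraph.Walk.length_cons] at this
end

section
/- Let G be a finite simple graph in which any two distinct vertices of degree 1 are at distance at least 5 (no walk of length at most 4 joins them). Let S be a vdp-cover of G satisfying property (B5): whenever P_i ∈ S is a dangling path, x is an out-endpoint of P_i, y is a neighbor of x lying on a 2-path P_j ∈ S with P_j ≠ P_i, and P_j = P_j′ y P_j″ is the decomposition of P_j at y, then either one of P_j′, P_j″ is a dangling path, or |P_j| ∈ {11, 17} and |P_j′| = |P_j″|. Then for every 2-path P ∈ S that has a neighboring dangling path of S (a dangling path Q ∈ S, Q ≠ P, some vertex of which is adjacent in G to some vertex of P), one has |P| ∈ {11, 17} and P has exactly one neighboring dangling path of S. -/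
/-!
Let `Q` be a dangling path of `S` next to a vertex `w` of the 2-path `P`, and split `P` at `w`
as `P' w P''`. The leaf of `Q` lies within distance 2 of `w`; if `P'` or `P''` were dangling,
its leaf would also lie within distance 2 of `w`, giving two distinct leaves at distance at
most 4. Hence (B5) forces `|P| ∈ {11, 17}` with `w` the middle vertex of `P`. A second
dangling neighbour of `P` would then have its leaf within distance 2 of the same middle
vertex, so both leaves coincide and, the paths being disjoint, so do the two dangling paths.
-/

/-- A path of `G`, modelled as a nonempty duplicate-free list of vertices whose
consecutive entries are adjacent. Its order (number of vertices) is `l.length`;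
it is an `i`-path when `l.length % 3 = i`. -/
def IsPathList {V : Type*} (G : SimpleGraph V) (l : List V) : Prop :=
  l ≠ [] ∧ l.Nodup ∧ l.Chain' G.Adj

def VdpCover {V : Type*} (G : SimpleGraph V) (S : Finset (List V)) : Prop :=
  (∀ l ∈ S, IsPathList G l) ∧
  (∀ l ∈ S, ∀ l' ∈ S, l ≠ l' → ∀ x : V, x ∈ l → x ∉ l') ∧
  (∀ v : V, ∃ l ∈ S, v ∈ l)

def IsEndpoint {V : Type*} (l : List V) (x : V) : Prop :=
  l.head? = some x ∨ l.getLast? = some x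

def IsOutEndpoint {V : Type*} (G : SimpleGraph V) (l : List V) (x : V) : Prop :=
  IsEndpoint l x ∧ ∃ z : V, z ∉ l ∧ G.Adj x z

def Dangling {V : Type*} [Fintype V] (G : SimpleGraph V) [DecidableRel G.Adj]
    (l : List V) : Prop :=
  ∃ u w : V, l = [u, w] ∧ G.Adj u w ∧
    ((G.degree u = 1 ∧ G.degree w ≠ 1) ∨ (G.degree u ≠ 1 ∧ G.degree w = 1))

section

open SimpleGraph

variable {V : Type*}

def LeavesFarApart [Fintype V] (G : SimpleGraph V) [DecidableRel G.Adj] : Prop :=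
  ∀ u v : V, u ≠ v → G.degree u = 1 → G.degree v = 1 → ∀ p : G.Walk u v, 5 ≤ p.length

def HasPropertyB5 [Fintype V] (G : SimpleGraph V) [DecidableRel G.Adj]
    (S : Finset (List V)) : Prop :=
  ∀ Pi ∈ S, Dangling G Pi →
    ∀ x : V, IsOutEndpoint G Pi x →
    ∀ Pj ∈ S, Pj ≠ Pi → Pj.length % 3 = 2 →
    ∀ y ∈ Pj, G.Adj x y →
    ∀ P' P'' : List V, Pj = P' ++ y :: P'' →
      Dangling G P' ∨ Dangling G P'' ∨
      ((Pj.length = 11 ∨ Pj.length = 17) ∧ P'.length = P''.length)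

def IsNeighboringDangling [Fintype V] (G : SimpleGraph V) [DecidableRel G.Adj]
    (S : Finset (List V)) (P Q : List V) : Prop :=
  Q ∈ S ∧ Q ≠ P ∧ Dangling G Q ∧ ∃ u ∈ Q, ∃ w ∈ P, G.Adj u w

theorem List.eq_of_append_cons_of_length_eq {l A B A' B' : List V} {w w' : V}
    (h : l = A ++ w :: B) (h' : l = A' ++ w' :: B') (hAB : A.length = B.length)
    (hAB' : A'.length = B'.length) : w = w' := by
  have hlen : A.length = A'.length := by
    have := congrArg List.length (h.symm.trans h')
    simp only [List.length_append, List.length_cons] at this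
    omega
  have := (List.append_inj (h.symm.trans h') hlen).2
  exact (List.cons.inj this).1

theorem List.IsChain.exists_rel_getLast_of_append_cons {R : V → V → Prop}
    {A B : List V} {w : V} (h : (A ++ w :: B).IsChain R) (hA : A ≠ []) :
    ∃ v ∈ A, R v w := by
  obtain ⟨-, -, hlast⟩ := List.isChain_append.1 h
  exact ⟨A.getLast hA, A.getLast_mem hA,
    hlast _ (by simp [List.getLast?_eq_some_getLast hA]) _ rfl⟩

theorem List.IsChain.exists_rel_head_of_append_cons {R : V → V → Prop}
    {A B : List V} {w : V} (h : (A ++ w :: B).IsChain R) (hB : B ≠ []) :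
    ∃ v ∈ B, R w v := by
  obtain ⟨-, hwB, -⟩ := List.isChain_append.1 h
  exact ⟨B.head hB, B.head_mem hB,
    (List.isChain_cons.1 hwB).1 _ (by simp [List.head?_eq_some_head hB])⟩

theorem VdpCover.not_mem_of_mem {G : SimpleGraph V} {S : Finset (List V)}
    (hS : VdpCover G S) {P Q : List V}
    (hP : P ∈ S) (hQ : Q ∈ S) (hPQ : P ≠ Q) {x : V} (hx : x ∈ P) : x ∉ Q :=
  hS.2.1 P hP Q hQ hPQ x hx

section

variable [Fintype V] {G : SimpleGraph V} [DecidableRel G.Adj]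

theorem LeavesFarApart.eq_of_walks_le_two (hfar : LeavesFarApart G) {u v w : V}
    (hu : G.degree u = 1) (hv : G.degree v = 1) (p : G.Walk u w) (q : G.Walk v w)
    (hp : p.length ≤ 2) (hq : q.length ≤ 2) : u = v := by
  by_contra hne
  have := hfar u v hne hu hv (p.append q.reverse)
  rw [Walk.length_append, Walk.length_reverse] at this
  omega

theorem Dangling.ne_nil {D : List V} (hD : Dangling G D) : D ≠ [] := by
  obtain ⟨a, b, rfl, -⟩ := hD
  simp

theorem Dangling.isOutEndpoint {D : List V} (hD : Dangling G D) {u w : V} (hu : u ∈ D)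
    (hw : w ∉ D) (huw : G.Adj u w) : IsOutEndpoint G D u := by
  obtain ⟨a, b, rfl, -⟩ := hD
  refine ⟨?_, w, hw, huw⟩
  rcases List.mem_pair.1 hu with rfl | rfl <;> simp [IsEndpoint]

theorem Dangling.exists_leaf_walk_le_two {D : List V} (hD : Dangling G D) {u w : V}
    (hu : u ∈ D) (huw : G.Adj u w) :
    ∃ ℓ ∈ D, G.degree ℓ = 1 ∧ ∃ p : G.Walk ℓ w, p.length ≤ 2 := by
  obtain ⟨a, b, rfl, hab, ⟨ha, -⟩ | ⟨-, hb⟩⟩ := hD <;>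
    rcases List.mem_pair.1 hu with rfl | rfl
  · exact ⟨u, by simp, ha, .cons huw .nil, by simp⟩
  · exact ⟨a, by simp, ha, .cons hab (.cons huw .nil), by simp⟩
  · exact ⟨b, by simp, hb, .cons hab.symm (.cons huw .nil), by simp⟩
  · exact ⟨u, by simp, hb, .cons huw .nil, by simp⟩

theorem LeavesFarApart.not_dangling_of_adj (hfar : LeavesFarApart G) {D : List V}
    {d w v : V} (hd : G.degree d = 1) (hdD : d ∉ D) (p : G.Walk d w) (hp : p.length ≤ 2)
    (hv : v ∈ D) (hvw : G.Adj v w) : ¬ Dangling G D := fun hD => by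
  obtain ⟨ℓ, hℓD, hℓ, q, hq⟩ := hD.exists_leaf_walk_le_two hv hvw
  exact hdD (hfar.eq_of_walks_le_two hd hℓ p q hp hq ▸ hℓD)

variable {S : Finset (List V)}

theorem HasPropertyB5.length_eq_of_split (hB5 : HasPropertyB5 G S) (hfar : LeavesFarApart G)
    (hS : VdpCover G S) {P Q : List V} (hP : P ∈ S) (hP2 : P.length % 3 = 2) (hQ : Q ∈ S)
    (hQP : Q ≠ P) (hQd : Dangling G Q) {u w : V} (hu : u ∈ Q) (huw : G.Adj u w)
    {P' P'' : List V} (hsplit : P = P' ++ w :: P'') :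
    (P.length = 11 ∨ P.length = 17) ∧ P'.length = P''.length := by
  have hwP : w ∈ P := by simp [hsplit]
  have hchain : (P' ++ w :: P'').IsChain G.Adj := hsplit ▸ (hS.1 P hP).2.2
  obtain ⟨d, hdQ, hd, p, hp⟩ := hQd.exists_leaf_walk_le_two hu huw
  have hdP : d ∉ P := hS.not_mem_of_mem hQ hP hQP hdQ
  have hout := hQd.isOutEndpoint hu (hS.not_mem_of_mem hP hQ hQP.symm hwP) huw
  rcases hB5 Q hQ hQd u hout P hP hQP.symm hP2 w hwP huw P' P'' hsplit with h' | h'' | h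
  · obtain ⟨v, hv, hvw⟩ := hchain.exists_rel_getLast_of_append_cons h'.ne_nil
    have hdP' : d ∉ P' := fun h => hdP (hsplit ▸ List.mem_append_left _ h)
    exact absurd h' (hfar.not_dangling_of_adj hd hdP' p hp hv hvw)
  · obtain ⟨v, hv, hwv⟩ := hchain.exists_rel_head_of_append_cons h''.ne_nil
    have hdP'' : d ∉ P'' := fun h =>
      hdP (hsplit ▸ List.mem_append_right _ (List.mem_cons_of_mem _ h))
    exact absurd h'' (hfar.not_dangling_of_adj hd hdP'' p hp hv hwv.symm)
  · exact h

theorem HasPropertyB5.length_of_neighboringDangling (hB5 : HasPropertyB5 G S)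
    (hfar : LeavesFarApart G) (hS : VdpCover G S) {P Q : List V} (hP : P ∈ S)
    (hP2 : P.length % 3 = 2) (hQ : IsNeighboringDangling G S P Q) :
    P.length = 11 ∨ P.length = 17 := by
  obtain ⟨hQS, hQP, hQd, u, hu, w, hw, huw⟩ := hQ
  obtain ⟨A, B, hAB⟩ := List.append_of_mem hw
  exact (hB5.length_eq_of_split hfar hS hP hP2 hQS hQP hQd hu huw hAB).1

theorem HasPropertyB5.neighboringDangling_unique (hB5 : HasPropertyB5 G S)
    (hfar : LeavesFarApart G) (hS : VdpCover G S) {P Q Q' : List V} (hP : P ∈ S)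
    (hP2 : P.length % 3 = 2) (hQ : IsNeighboringDangling G S P Q)
    (hQ' : IsNeighboringDangling G S P Q') : Q' = Q := by
  obtain ⟨hQS, hQP, hQd, u, hu, w, hw, huw⟩ := hQ
  obtain ⟨hQ'S, hQ'P, hQ'd, u', hu', w', hw', huw'⟩ := hQ'
  obtain ⟨A, B, hAB⟩ := List.append_of_mem hw
  obtain ⟨A', B', hAB'⟩ := List.append_of_mem hw'
  have hww' : w = w' := List.eq_of_append_cons_of_length_eq hAB hAB'
    (hB5.length_eq_of_split hfar hS hP hP2 hQS hQP hQd hu huw hAB).2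
    (hB5.length_eq_of_split hfar hS hP hP2 hQ'S hQ'P hQ'd hu' huw' hAB').2
  subst hww'
  obtain ⟨d, hdQ, hd, p, hp⟩ := hQd.exists_leaf_walk_le_two hu huw
  obtain ⟨d', hd'Q', hd', p', hp'⟩ := hQ'd.exists_leaf_walk_le_two hu' huw'
  by_contra hne
  have hdd' : d' = d := hfar.eq_of_walks_le_two hd' hd p' p hp' hp
  exact hS.not_mem_of_mem hQ'S hQS hne hd'Q' (hdd' ▸ hdQ)

end

end

theorem two_path_neighboring_dangling_general {V : Type*} [Fintype V]
    (G : SimpleGraph V) [DecidableRel G.Adj]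
    (hdist : ∀ u v : V, u ≠ v → G.degree u = 1 → G.degree v = 1 →
      ∀ p : G.Walk u v, 5 ≤ p.length)
    (S : Finset (List V)) (hS : VdpCover G S)
    (hB5 : ∀ Pi ∈ S, Dangling G Pi →
      ∀ x : V, IsOutEndpoint G Pi x →
      ∀ Pj ∈ S, Pj ≠ Pi → Pj.length % 3 = 2 →
      ∀ y ∈ Pj, G.Adj x y →
      ∀ P' P'' : List V, Pj = P' ++ y :: P'' →
        Dangling G P' ∨ Dangling G P'' ∨
        ((Pj.length = 11 ∨ Pj.length = 17) ∧ P'.length = P''.length)) :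
    ∀ P ∈ S, P.length % 3 = 2 →
      (∃ Q ∈ S, Q ≠ P ∧ Dangling G Q ∧ ∃ u ∈ Q, ∃ w ∈ P, G.Adj u w) →
      (P.length = 11 ∨ P.length = 17) ∧
      (∃! Q : List V, Q ∈ S ∧ Q ≠ P ∧ Dangling G Q ∧
        ∃ u ∈ Q, ∃ w ∈ P, G.Adj u w) := by
  have hB5 : HasPropertyB5 G S := hB5
  rintro P hP hP2 ⟨Q, hQ⟩
  exact ⟨hB5.length_of_neighboringDangling hdist hS hP hP2 hQ, Q, hQ,
    fun Q' hQ' => hB5.neighboringDangling_unique hdist hS hP hP2 hQ hQ'⟩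

/-- Suppose distinct degree-1 vertices of `G` are at distance at least 5 (no walk of
length at most 4 joins them), and `S` is a vdp-cover of `G` satisfying property (B5):
whenever `Pi ∈ S` is dangling with out-endpoint `x`, and `y` is a neighbor of `x` on a
2-path `Pj = P' ++ y :: P''` of `S` with `Pj ≠ Pi`, then one of `P'`, `P''` is
dangling, or `|Pj| ∈ {11, 17}` and `|P'| = |P''|`. Then every 2-path `P ∈ S` with a
neighboring dangling path of `S` has order 11 or 17 and has exactly one neighboring
dangling path of `S`. -/
theorem two_path_neighboring_dangling {V : Type*} [Fintype V] [DecidableEq V]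
    (G : SimpleGraph V) [DecidableRel G.Adj]
    (hdist : ∀ u v : V, u ≠ v → G.degree u = 1 → G.degree v = 1 →
      ∀ p : G.Walk u v, 5 ≤ p.length)
    (S : Finset (List V)) (hS : VdpCover G S)
    (hB5 : ∀ Pi ∈ S, Dangling G Pi →
      ∀ x : V, IsOutEndpoint G Pi x →
      ∀ Pj ∈ S, Pj ≠ Pi → Pj.length % 3 = 2 →
      ∀ y ∈ Pj, G.Adj x y →
      ∀ P' P'' : List V, Pj = P' ++ y :: P'' →
        Dangling G P' ∨ Dangling G P'' ∨
        ((Pj.length = 11 ∨ Pj.length = 17) ∧ P'.length = P''.length)) :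
    ∀ P ∈ S, P.length % 3 = 2 →
      (∃ Q ∈ S, Q ≠ P ∧ Dangling G Q ∧ ∃ u ∈ Q, ∃ w ∈ P, G.Adj u w) →
      (P.length = 11 ∨ P.length = 17) ∧
      (∃! Q : List V, Q ∈ S ∧ Q ≠ P ∧ Dangling G Q ∧
        ∃ u ∈ Q, ∃ w ∈ P, G.Adj u w) :=
  two_path_neighboring_dangling_general G hdist S hS hB5
end
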